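/- Let 1 < p < ∞ and let a ∈ 𝔻 with a ≠ 0. Then for every f ∈ A^p, ∫_𝔻 f(z) / (1 − a·conj(z)) dσ(z) = (1/a) ∫_0^a f(ζ) dζ, where the right-hand integral is the complex line integral of f along the straight segment from 0 to a; that is, the function z ↦ 1/(1 − conj(a)z) is the kernel representing the functional f ↦ (1/a)∫_0^a f(ζ) dζ on A^p. -/

import Mathlib

open MeasureTheory Complex Metric

/-- Normalized area measure on the unit disc: Lebesgue measure restricted to
the unit disc, normalized so that the disc has measure 1. -/
noncomputable def σA : Measure ℂ :=
  (ENNReal.ofReal Real.pi)⁻¹ • (volume.restrict (ball (0:ℂ) 1))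

/-- The Bergman projection of an integrable function on the unit disc. -/
noncomputable def bergmanProj (g : ℂ → ℂ) : ℂ → ℂ :=
  fun z => ∫ ζ, g ζ / (1 - (starRingEnd ℂ) ζ * z) ^ 2 ∂σA

/-- Membership in the Bergman space `A^p`: analytic on the unit disc with
`∫ |f|^p dσ < ∞`. -/
def MemAp (p : ℝ) (f : ℂ → ℂ) : Prop :=
  DifferentiableOn ℂ f (ball (0:ℂ) 1) ∧
  Integrable (fun z => ‖f z‖ ^ p) σA

/-- The `A^p` norm `(∫ |f|^p dσ)^(1/p)`. -/
noncomputable def apNorm (p : ℝ) (f : ℂ → ℂ) : ℝ :=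
  (∫ z, ‖f z‖ ^ p ∂σA) ^ (1/p)

/-- `sgn w = w / |w|` for `w ≠ 0`, and `sgn 0 = 0`. -/
noncomputable def csgn (w : ℂ) : ℂ := if w = 0 then 0 else w / ‖w‖

/-- The function `|F|^{p-1} sgn F`. -/
noncomputable def modPow (p : ℝ) (F : ℂ → ℂ) : ℂ → ℂ :=
  fun z => ((‖F z‖ ^ (p - 1) : ℝ) : ℂ) * csgn (F z)

/-! On the circle `|z| = r` we have `conj z = r² / z`, so
`f z / (1 - a conj z) = z f z / (z - r² a)` and the Cauchy integral formula makes the circle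
average of `f z / (1 - a conj z)` equal to `f (r² a)`. Integrating over the disc in polar
coordinates gives `∫ f z / (1 - a conj z) dσ = ∫₀¹ 2r f (r² a) dr`, and the substitution `t = r²`
turns this into `∫₀¹ f (t a) dt`. -/

open Set Real ComplexConjugate

section VectorValued

variable {E : Type*} [NormedAddCommGroup E] [NormedSpace ℝ E]

theorem integrableOn_polarCoord_target {g : ℝ × ℝ → E} (hg : Integrable g) :
    IntegrableOn (fun p => p.1 • g (polarCoord.symm p)) polarCoord.target := by
  have hg' : IntegrableOn g (polarCoord.symm '' polarCoord.target) := by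
    rw [polarCoord.symm_image_target_eq_source]; exact hg.integrableOn
  refine ((integrableOn_image_iff_integrableOn_abs_det_fderiv_smul volume
    polarCoord.open_target.measurableSet
    (fun p _ => (hasFDerivAt_polarCoord_symm p).hasFDerivWithinAt)
    polarCoord.symm.injOn g).mp hg').congr_fun (fun p hp => ?_)
    polarCoord.open_target.measurableSet
  simp only [det_fderivPolarCoordSymm, abs_of_pos (mem_Ioi.mp hp.1)]

theorem Complex.integrableOn_polarCoord_target {g : ℂ → E} (hg : Integrable g) :
    IntegrableOn (fun p => p.1 • g (Complex.polarCoord.symm p)) polarCoord.target :=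
  _root_.integrableOn_polarCoord_target <|
    (Complex.volume_preserving_equiv_real_prod.symm.integrable_comp_emb
      Complex.measurableEquivRealProd.symm.measurableEmbedding).mpr hg

theorem Complex.polarCoord_symm_eq_circleMap (r θ : ℝ) :
    Complex.polarCoord.symm (r, θ) = circleMap 0 r θ := by
  simp [circleMap, Complex.exp_mul_I, ← Complex.ofReal_cos, ← Complex.ofReal_sin]

theorem integral_eq_integral_Ioi_circleAverage [CompleteSpace E] {g : ℂ → E}
    (hg : Integrable g) :
    ∫ z, g z = ∫ r in Ioi 0, (2 * π * r) • circleAverage g 0 r := by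
  have hpolar := Complex.integrableOn_polarCoord_target hg
  rw [← Complex.integral_comp_polarCoord_symm, polarCoord_target,
    Measure.volume_eq_prod, setIntegral_prod _ (by rwa [← Measure.volume_eq_prod])]
  refine setIntegral_congr_fun measurableSet_Ioi fun r _ => ?_
  have hperiod : Function.Periodic (fun θ => g (circleMap 0 r θ)) (2 * π) :=
    (periodic_circleMap 0 r).comp g
  have hshift := hperiod.intervalIntegral_add_eq (-π) 0
  rw [show -π + 2 * π = π by ring, zero_add] at hshift
  rw [circleAverage_def, smul_smul, mul_comm (2 * π), mul_assoc,
    mul_inv_cancel₀ (by positivity), mul_one, ← hshift, integral_smul,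
    intervalIntegral.integral_of_le (by linarith [pi_pos]), integral_Ioc_eq_integral_Ioo]
  simp only [Complex.polarCoord_symm_eq_circleMap]

theorem setIntegral_ball_eq_integral_circleAverage [CompleteSpace E] {g : ℂ → E} {R : ℝ}
    (hg : IntegrableOn g (ball 0 R)) :
    ∫ z in ball 0 R, g z = ∫ r in Ioo 0 R, (2 * π * r) • circleAverage g 0 r := by
  rw [← integral_indicator measurableSet_ball,
    integral_eq_integral_Ioi_circleAverage (hg.integrable_indicator measurableSet_ball),
    ← inter_eq_self_of_subset_right Ioo_subset_Ioi_self,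
    ← setIntegral_indicator measurableSet_Ioo]
  refine setIntegral_congr_fun measurableSet_Ioi fun r (hr : 0 < r) => ?_
  by_cases hrR : r < R
  · rw [indicator_of_mem (mem_Ioo.mpr ⟨hr, hrR⟩)]
    refine congrArg _ (circleAverage_congr_sphere fun z hz => indicator_of_mem ?_ g)
    rw [mem_sphere_zero_iff_norm, abs_of_pos hr] at hz
    rwa [mem_ball_zero_iff, hz]
  · rw [indicator_of_notMem fun h => hrR h.2]
    rw [circleAverage_congr_sphere (f₂ := fun _ => 0) fun z hz => indicator_of_notMem ?_ g,
      circleAverage_const, smul_zero]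
    rw [mem_sphere_zero_iff_norm, abs_of_pos hr] at hz
    rwa [mem_ball_zero_iff, hz]

theorem integral_σA (g : ℂ → E) : ∫ z, g z ∂σA = π⁻¹ • ∫ z in ball 0 1, g z := by
  rw [σA, integral_smul_measure, ENNReal.toReal_inv, ENNReal.toReal_ofReal pi_pos.le]

theorem integral_σA_eq_integral_circleAverage [CompleteSpace E] {g : ℂ → E}
    (hg : IntegrableOn g (ball 0 1)) :
    ∫ z, g z ∂σA = ∫ r in Ioo 0 1, (2 * r) • circleAverage g 0 r := by
  rw [integral_σA, setIntegral_ball_eq_integral_circleAverage hg, ← integral_smul]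
  refine setIntegral_congr_fun measurableSet_Ioo fun r _ => ?_
  rw [smul_smul]
  congr 1
  field_simp

theorem integral_two_mul_smul_comp_sq {g : ℝ → E} (hg : ContinuousOn g (Icc 0 1)) :
    ∫ r in (0 : ℝ)..1, (2 * r) • g (r ^ 2) = ∫ t in (0 : ℝ)..1, g t := by
  have hsq : (fun r : ℝ => r ^ 2) '' uIcc 0 1 ⊆ Icc 0 1 := by
    rintro _ ⟨r, hr, rfl⟩
    rw [uIcc_of_le zero_le_one] at hr
    exact ⟨sq_nonneg r, pow_le_one₀ hr.1 hr.2⟩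
  simpa using intervalIntegral.integral_deriv_smul_comp' (a := 0) (b := 1)
    (fun r _ => by simpa using hasDerivAt_pow 2 r) (by fun_prop) (hg.mono hsq)

end VectorValued

theorem circleAverage_div_one_sub_mul_conj {f : ℂ → ℂ} {a : ℂ} {r : ℝ} (hr : 0 < r)
    (hra : r * ‖a‖ < 1) (hf : DiffContOnCl ℂ f (ball 0 r)) :
    circleAverage (fun z => f z / (1 - a * conj z)) 0 r = f (r ^ 2 * a) := by
  have hw : (r : ℂ) ^ 2 * a ∈ ball 0 |r| := by
    rw [mem_ball_zero_iff, abs_of_pos hr, norm_mul, norm_pow, Complex.norm_real,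
      Real.norm_of_nonneg hr.le]
    nlinarith
  rw [← abs_of_pos hr] at hf
  rw [← hf.circleAverage_smul_div hw]
  refine circleAverage_congr_sphere fun z hz => ?_
  rw [mem_sphere_zero_iff_norm, abs_of_pos hr] at hz
  have hz0 : z ≠ 0 := by rintro rfl; simp at hz; linarith
  have hzz : z * conj z = (r : ℂ) ^ 2 := by
    rw [Complex.mul_conj, Complex.normSq_eq_norm_sq, hz]; push_cast; ring
  have hsub : z - (r : ℂ) ^ 2 * a = z * (1 - a * conj z) := by
    rw [← hzz]; ring
  have hker : 1 - a * conj z ≠ 0 := by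
    have hlt : ‖a * conj z‖ < 1 := by rwa [norm_mul, Complex.norm_conj, hz, mul_comm]
    exact sub_ne_zero.mpr fun h => by rw [← h, norm_one] at hlt; exact hlt.false
  rw [sub_zero, hsub, smul_eq_mul]
  field_simp

theorem MemAp.integrableOn_ball {p : ℝ} {f : ℂ → ℂ} (hp : 1 ≤ p) (hf : MemAp p f) :
    IntegrableOn f (ball 0 1) := by
  have : IsFiniteMeasure (volume.restrict (ball (0 : ℂ) 1)) :=
    isFiniteMeasure_restrict.mpr measure_ball_lt_top.ne
  have hnorm : Integrable (fun z => ‖f z‖ ^ (ENNReal.ofReal p).toReal)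
      (volume.restrict (ball 0 1)) := by
    rw [ENNReal.toReal_ofReal (by linarith)]
    exact (integrable_smul_measure (by simp) (by simp [pi_pos])).mp hf.2
  refine MemLp.integrable (ENNReal.one_le_ofReal.mpr hp) ?_
  exact (integrable_norm_rpow_iff (hf.1.continuousOn.aestronglyMeasurable measurableSet_ball)
    (by simp; linarith) ENNReal.ofReal_ne_top).mp hnorm

theorem one_sub_norm_le_norm_one_sub_mul_conj (a : ℂ) {z : ℂ} (hz : ‖z‖ ≤ 1) :
    1 - ‖a‖ ≤ ‖1 - a * conj z‖ := by
  have hle : ‖a * conj z‖ ≤ ‖a‖ := by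
    rw [norm_mul, Complex.norm_conj]
    exact mul_le_of_le_one_right (norm_nonneg a) hz
  linarith [norm_one (α := ℂ) ▸ norm_sub_norm_le (1 : ℂ) (a * conj z)]

theorem IntegrableOn.div_one_sub_mul_conj {f : ℂ → ℂ} {a : ℂ} (ha : ‖a‖ < 1)
    (hf : IntegrableOn f (ball 0 1)) :
    IntegrableOn (fun z => f z / (1 - a * conj z)) (ball 0 1) := by
  simp_rw [div_eq_mul_inv]
  refine hf.mul_bdd (c := (1 - ‖a‖)⁻¹) (by fun_prop) ?_
  filter_upwards [ae_restrict_mem measurableSet_ball] with z hz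
  rw [norm_inv]
  exact inv_anti₀ (by linarith)
    (one_sub_norm_le_norm_one_sub_mul_conj a (mem_ball_zero_iff.mp hz).le)

/-- `1/(1 - conj(a) z)` is the kernel representing the functional
`f ↦ (1/a) ∫_0^a f(ζ) dζ` on `A^p`, where the line integral along the segment from
`0` to `a` is parametrized as `∫_0^1 a f(ta) dt`. -/
theorem stmt10 (p : ℝ) (hp : 1 < p) (a : ℂ) (ha : a ∈ ball (0:ℂ) 1) (ha0 : a ≠ 0) :
    ∀ f : ℂ → ℂ, MemAp p f →
      (∫ z, f z / (1 - a * (starRingEnd ℂ) z) ∂σA)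
        = (1 / a) * ∫ t in (0:ℝ)..1, a * f ((t : ℂ) * a) := by
  intro f hf
  have ha' : ‖a‖ < 1 := mem_ball_zero_iff.mp ha
  have hcircle : ∀ r ∈ Ioo (0 : ℝ) 1,
      circleAverage (fun z => f z / (1 - a * conj z)) 0 r = f (r ^ 2 * a) := fun r hr =>
    circleAverage_div_one_sub_mul_conj hr.1
      (mul_lt_one_of_nonneg_of_lt_one_left hr.1.le hr.2 ha'.le)
      (hf.1.diffContOnCl_ball (closedBall_subset_ball hr.2))
  have hsegment : ContinuousOn (fun t : ℝ => f (t * a)) (Icc 0 1) := by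
    refine hf.1.continuousOn.comp (by fun_prop) fun t ht => ?_
    rw [mem_ball_zero_iff, norm_mul, Complex.norm_real, Real.norm_of_nonneg ht.1]
    exact (mul_le_of_le_one_left (norm_nonneg a) ht.2).trans_lt ha'
  calc ∫ z, f z / (1 - a * conj z) ∂σA
      = ∫ r in Ioo 0 1, (2 * r) • circleAverage (fun z => f z / (1 - a * conj z)) 0 r :=
        integral_σA_eq_integral_circleAverage
          (IntegrableOn.div_one_sub_mul_conj ha' (hf.integrableOn_ball hp.le))
    _ = ∫ r in (0 : ℝ)..1, (2 * r) • f ((r ^ 2 : ℝ) * a) := by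
        rw [intervalIntegral.integral_of_le zero_le_one, integral_Ioc_eq_integral_Ioo]
        refine setIntegral_congr_fun measurableSet_Ioo fun r hr => ?_
        rw [hcircle r hr, Complex.ofReal_pow]
    _ = ∫ t in (0 : ℝ)..1, f (t * a) := integral_two_mul_smul_comp_sq hsegment
    _ = (1 / a) * ∫ t in (0 : ℝ)..1, a * f (t * a) := by
        rw [intervalIntegral.integral_const_mul, ← mul_assoc, one_div_mul_cancel ha0, one_mul]
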